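/- Let a, b, c, d ∈ ℂ. The system of equations a² + b²c = 0 and 2ab + b²d = 0 holds if and only if (a = 0 and b = 0) or (a = -bd/2 and c = -d²/4). -/
import Mathlib


/-- For `a, b, c, d ∈ ℂ`: `a² + b²c = 0` and `2ab + b²d = 0` iff
(`a = 0` and `b = 0`) or (`a = -bd/2` and `c = -d²/4`). -/
theorem stmt_17 (a b c d : ℂ) :
    (a ^ 2 + b ^ 2 * c = 0 ∧ 2 * a * b + b ^ 2 * d = 0) ↔
      ((a = 0 ∧ b = 0) ∨ (a = -(b * d) / 2 ∧ c = -(d ^ 2) / 4)) := by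
  constructor
  · rintro ⟨h1, h2⟩
    by_cases hb : b = 0
    · subst hb
      simp at h1
      exact Or.inl ⟨h1, rfl⟩
    · right
      have ha : a = -(b * d) / 2 := by
        field_simp
        have : b * (2 * a + b * d) = 0 := by ring_nf; linear_combination h2
        rcases mul_eq_zero.1 this with h | h
        · exact absurd h hb
        · linear_combination h
      refine ⟨ha, ?_⟩
      subst ha
      have : b ^ 2 * (c + d ^ 2 / 4) = 0 := by linear_combination h1
      rcases mul_eq_zero.1 this with h | h
      · exact absurd (pow_eq_zero_iff (by norm_num) |>.1 h) hb
      · linear_combination h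
  · rintro (⟨ha, hb⟩ | ⟨ha, hc⟩) <;> subst ha <;> [subst hb; subst hc] <;>
      constructor <;> ring
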